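/- arXiv:1509.06424 — 2 statements merged into one kernel-verified Lean document; each statement's English description precedes it below -/
import Mathlib

section
/- Let K be an abstract simplicial complex on a linearly ordered vertex set, Y a simplicial set, and δ a twisted structure on K with coefficients in Y. Then the twisted face maps d_i^δ on the graded collection {Y_n × S(K)_n} satisfy the Δ-identity: for all n ≥ 2 and all 0 ≤ j ≤ i ≤ n−1, d_i^δ ∘ d_j^δ = d_j^δ ∘ d_{i+1}^δ as maps Y_n × S(K)_n → Y_{n−2} × S(K)_{n−2}. -/
open CategoryTheory Simplicial

universe u

/-- An abstract simplicial complex with vertices in a type `V`: a collection of nonempty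
finite subsets of `V` closed under passage to nonempty subsets. -/
structure AbsSimplicialComplex (V : Type u) where
  faces : Set (Finset V)
  nonempty_of_mem : ∀ s ∈ faces, s.Nonempty
  down_closed : ∀ s ∈ faces, ∀ t ⊆ s, t.Nonempty → t ∈ faces

variable {V : Type u} [LinearOrder V]

/-- The `n`-simplices of the simplicial set `S(K)`: weakly increasing `(n+1)`-tuples of
vertices spanning a simplex of `K`. -/
def SSimplex (K : AbsSimplicialComplex V) (n : ℕ) : Type u :=
  { v : Fin (n + 1) → V // Monotone v ∧ Finset.image v Finset.univ ∈ K.faces }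

/-- The face `d_i` of `S(K)`, deleting the `i`-th vertex. -/
def SSimplex.face {K : AbsSimplicialComplex V} {n : ℕ} (i : Fin (n + 2))
    (v : SSimplex K (n + 1)) : SSimplex K n :=
  ⟨v.1 ∘ i.succAbove,
    v.2.1.comp (Fin.strictMono_succAbove i).monotone,
    K.down_closed _ v.2.2 _
      (by rw [← Finset.image_image]; exact Finset.image_subset_image (Finset.subset_univ _))
      (Finset.image_nonempty.mpr Finset.univ_nonempty)⟩

/-- The twisted face map `d_i^δ : Y_{n+1} × S(K)_{n+1} → Y_n × S(K)_n`,
`d_i^δ(y, (v₀,…,v_{n+1})) = (δ_{v_i}(d_i y), (v₀,…,v̂_i,…,v_{n+1}))`. -/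
def twistedFace {K : AbsSimplicialComplex V} (Y : SSet.{u})
    (δ : V → (Y ⟶ Y)) {n : ℕ} (i : Fin (n + 2)) :
    Y _⦋n + 1⦌ × SSimplex K (n + 1) → Y _⦋n⦌ × SSimplex K n :=
  fun p => ((δ (p.2.1 i)).app (Opposite.op (SimplexCategory.mk n)) (Y.δ i p.1),
    p.2.face i)

/-!
Both composites delete the vertices `v_j` and `v_{i+1}` of the simplex and apply `d_j d_{i+1}`
(equivalently `d_i d_j`) to the `Y`-component, twisted once by `δ_{v_j}` and once by
`δ_{v_{i+1}}`. Since each `δ_v` is simplicial, the twists can be moved past the faces, and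
they commute with each other because `{v_j, v_{i+1}}` is a simplex of `K`.
-/

theorem Fin.castSucc_succAbove_succAbove_of_le {n : ℕ} {i j : Fin (n + 2)} (hij : j ≤ i)
    (k : Fin (n + 1)) :
    j.castSucc.succAbove (i.succAbove k) = i.succ.succAbove (j.succAbove k) :=
  (congrArg (fun f => f.toOrderHom k) (SimplexCategory.δ_comp_δ hij)).symm

namespace SSimplex

variable {K : AbsSimplicialComplex V} {n : ℕ}

theorem face_face_of_le {i j : Fin (n + 2)} (hij : j ≤ i) (v : SSimplex K (n + 2)) :
    (v.face j.castSucc).face i = (v.face i.succ).face j :=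
  Subtype.ext <| funext fun k => congrArg v.1 (Fin.castSucc_succAbove_succAbove_of_le hij k)

theorem pair_mem_faces (v : SSimplex K n) (a b : Fin (n + 1)) :
    ({v.1 a, v.1 b} : Finset V) ∈ K.faces := by
  refine K.down_closed _ v.2.2 _ ?_ (Finset.insert_nonempty _ _)
  simp only [Finset.insert_subset_iff, Finset.singleton_subset_iff]
  exact ⟨Finset.mem_image_of_mem _ (Finset.mem_univ a),
    Finset.mem_image_of_mem _ (Finset.mem_univ b)⟩

end SSimplex

theorem SSet.app_δ_app_δ_of_comm {Y : SSet.{u}} {f g : Y ⟶ Y} (hfg : f ≫ g = g ≫ f) {n : ℕ}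
    {i j : Fin (n + 2)} (hij : j ≤ i) (y : Y _⦋n + 2⦌) :
    g.app _ (Y.δ i (f.app _ (Y.δ j.castSucc y))) =
      f.app _ (Y.δ j (g.app _ (Y.δ i.succ y))) := by
  rw [← SSet.δ_naturality_apply, ← SSet.δ_naturality_apply, SSet.δ_comp_δ_apply hij]
  exact types_congr_hom (congr_app hfg _) _

/-- for a twisted structure `δ` on an abstract simplicial complex `K` (on a
linearly ordered vertex set) with coefficients in a simplicial set `Y`, the twisted face maps
on `{Y_n × S(K)_n}` satisfy the Δ-identity `d_i^δ ∘ d_j^δ = d_j^δ ∘ d_{i+1}^δ` for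
`0 ≤ j ≤ i ≤ n − 1`. -/
theorem twistedFace_delta_identity {K : AbsSimplicialComplex V} (Y : SSet.{u})
    (δ : V → (Y ⟶ Y))
    (hcomm : ∀ v w : V, ({v, w} : Finset V) ∈ K.faces →
      δ v ≫ δ w = δ w ≫ δ v)
    {n : ℕ} (i j : Fin (n + 2)) (hij : j ≤ i) :
    (twistedFace (K := K) Y δ i) ∘ (twistedFace Y δ j.castSucc) =
      (twistedFace Y δ j) ∘ (twistedFace Y δ i.succ) := by
  funext ⟨y, v⟩
  refine Prod.ext ?_ (SSimplex.face_face_of_le hij v)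
  have hvertex_left : j.castSucc.succAbove i = i.succ :=
    Fin.succAbove_castSucc_of_le _ _ hij
  have hvertex_right : i.succ.succAbove j = j.castSucc :=
    Fin.succAbove_succ_of_le _ _ hij
  dsimp only [twistedFace, SSimplex.face, Function.comp_apply]
  rw [hvertex_left, hvertex_right]
  exact SSet.app_δ_app_δ_of_comm (hcomm _ _ (v.pair_mem_faces _ _)) hij y
end

section
/- Let G be a simplicial group, C a small category, and δ a nonsingular twisted structure on C with coefficients in G. Then the twisted face homomorphisms d_i^δ and twisted degeneracy homomorphisms s_i^δ on the sequence of groups {F^G[C]_n} satisfy all simplicial identities: d_i^δ d_j^δ = d_j^δ d_{i+1}^δ for i ≥ j; s_j^δ s_i^δ = s_{i+1}^δ s_j^δ for i ≥ j; d_i^δ s_j^δ = s_{j−1}^δ d_i^δ for i < j; d_j^δ s_j^δ = id = d_{j+1}^δ s_j^δ; and d_i^δ s_j^δ = s_j^δ d_{i−1}^δ for i > j+1. Hence F^G_δ[C] = {F^G[C]_n} is a simplicial group. -/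
open CategoryTheory Simplicial

universe u

namespace TwistedSG

variable (C : Type u) [SmallCategory C] (G : SimplicialObject GrpCat.{u}) (a₀ : C)

/-- The group of `n`-simplices of the simplicial group `G`. -/
abbrev Gn (n : ℕ) : Type u := ↥(G.obj (Opposite.op (SimplexCategory.mk n)))

/-- The face map of the nerve of `C` (whose `n`-simplices are `ComposableArrows C n`). -/
def nerveFace {n : ℕ} (i : Fin (n + 2)) (x : ComposableArrows C (n + 1)) :
    ComposableArrows C n :=
  (nerve C).δ i x

/-- The degeneracy map of the nerve of `C`. -/
def nerveDegen {n : ℕ} (i : Fin (n + 1)) (x : ComposableArrows C n) :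
    ComposableArrows C (n + 1) :=
  (nerve C).σ i x

/-- The totally degenerate `n`-simplex `a₀ⁿ` of the nerve at the base object `a₀`. -/
def basept (n : ℕ) : ComposableArrows C n :=
  (CategoryTheory.Functor.const (Fin (n + 1))).obj a₀

/-- The free product of copies of `G_n` indexed by the `n`-simplices of the nerve. -/
abbrev FreeProd (n : ℕ) : Type u :=
  Monoid.CoprodI (fun _ : ComposableArrows C n => Gn G n)

/-- The inclusion of the copy of `G_n` labelled by the simplex `x`. -/
def incl {n : ℕ} (x : ComposableArrows C n) : Gn G n →* FreeProd C G n :=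
  Monoid.CoprodI.of (M := fun _ : ComposableArrows C n => Gn G n) (i := x)

/-- `F^G[C]_n`: the quotient of the free product of the copies `(G_n)_x`, `x ∈ N(C)_n`,
by the normal closure of the copy indexed by the basepoint simplex `a₀ⁿ`. -/
abbrev FG (n : ℕ) : Type u :=
  FreeProd C G n ⧸ Subgroup.normalClosure (Set.range (incl C G (basept C a₀ n)))

/-- The twisted face homomorphism on the free product, with values in the quotient:
`g_x ↦ (δ_{v_i}(d_i g))_{d_i x}`. -/
noncomputable def dFaceAux (δ : C → (G ≅ G)) {n : ℕ} (i : Fin (n + 2)) :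
    FreeProd C G (n + 1) →* FG C G a₀ n :=
  Monoid.CoprodI.lift fun x =>
    ((QuotientGroup.mk' _).comp (incl C G (nerveFace C i x))).comp
      ((((δ (x.obj i)).hom.app (Opposite.op (SimplexCategory.mk n))).hom :
          Gn G n →* Gn G n).comp
        ((G.δ i).hom : Gn G (n + 1) →* Gn G n))

lemma nerveFace_basept {n : ℕ} (i : Fin (n + 2)) :
    nerveFace C i (basept C a₀ (n + 1)) = basept C a₀ n := rfl

lemma nerveDegen_basept {n : ℕ} (i : Fin (n + 1)) :
    nerveDegen C i (basept C a₀ n) = basept C a₀ (n + 1) := rfl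

/-- The twisted face homomorphism `d_i^δ : F^G[C]_{n+1} → F^G[C]_n`, determined by
`d_i^δ(g_x) = (δ_{v_i}(d_i g))_{d_i x}`. -/
noncomputable def dFace (δ : C → (G ≅ G)) {n : ℕ} (i : Fin (n + 2)) :
    FG C G a₀ (n + 1) →* FG C G a₀ n :=
  QuotientGroup.lift _ (dFaceAux C G a₀ δ i) (by
    have hsub : Set.range (incl C G (basept C a₀ (n + 1))) ⊆
        ↑(dFaceAux C G a₀ δ i).ker := by
      rintro _ ⟨g, rfl⟩
      have : dFaceAux C G a₀ δ i (incl C G (basept C a₀ (n + 1)) g) =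
          (QuotientGroup.mk' _) (incl C G (basept C a₀ n)
            ((((δ ((basept C a₀ (n+1)).obj i)).hom.app (Opposite.op (SimplexCategory.mk n)))).hom
              (((G.δ i).hom : Gn G (n + 1) →* Gn G n) g))) := by
        simp only [dFaceAux, incl, Monoid.CoprodI.lift_of]; rfl
      rw [SetLike.mem_coe, MonoidHom.mem_ker, this, QuotientGroup.mk'_apply,
        QuotientGroup.eq_one_iff]
      exact Subgroup.subset_normalClosure ⟨_, rfl⟩
    exact fun y hy => MonoidHom.mem_ker.mp (Subgroup.normalClosure_le_normal hsub hy))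

/-- The twisted degeneracy homomorphism on the free product, with values in the quotient:
`g_x ↦ (δ_{v_i}⁻¹(s_i g))_{s_i x}`. -/
noncomputable def sDegenAux (δ : C → (G ≅ G)) {n : ℕ} (i : Fin (n + 1)) :
    FreeProd C G n →* FG C G a₀ (n + 1) :=
  Monoid.CoprodI.lift fun x =>
    ((QuotientGroup.mk' _).comp (incl C G (nerveDegen C i x))).comp
      ((((δ (x.obj i)).inv.app (Opposite.op (SimplexCategory.mk (n + 1)))).hom :
          Gn G (n + 1) →* Gn G (n + 1)).comp
        ((G.σ i).hom : Gn G n →* Gn G (n + 1)))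

/-- The twisted degeneracy homomorphism `s_i^δ : F^G[C]_n → F^G[C]_{n+1}`, determined by
`s_i^δ(g_x) = (δ_{v_i}⁻¹(s_i g))_{s_i x}`. -/
noncomputable def sDegen (δ : C → (G ≅ G)) {n : ℕ} (i : Fin (n + 1)) :
    FG C G a₀ n →* FG C G a₀ (n + 1) :=
  QuotientGroup.lift _ (sDegenAux C G a₀ δ i) (by
    have hsub : Set.range (incl C G (basept C a₀ n)) ⊆
        ↑(sDegenAux C G a₀ δ i).ker := by
      rintro _ ⟨g, rfl⟩
      have : sDegenAux C G a₀ δ i (incl C G (basept C a₀ n) g) =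
          (QuotientGroup.mk' _) (incl C G (basept C a₀ (n + 1))
            ((((δ ((basept C a₀ n).obj i)).inv.app (Opposite.op (SimplexCategory.mk (n + 1))))).hom
              (((G.σ i).hom : Gn G n →* Gn G (n + 1)) g))) := by
        simp only [sDegenAux, incl, Monoid.CoprodI.lift_of]; rfl
      rw [SetLike.mem_coe, MonoidHom.mem_ker, this, QuotientGroup.mk'_apply,
        QuotientGroup.eq_one_iff]
      exact Subgroup.subset_normalClosure ⟨_, rfl⟩
    exact fun y hy => MonoidHom.mem_ker.mp (Subgroup.normalClosure_le_normal hsub hy))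

end TwistedSG

/-!
On a generator `g_x`, each twisted face or degeneracy applies the face or degeneracy of `G`
followed by a twisting automorphism attached to a vertex of `x`, and moves the label `x` by the
face or degeneracy of the nerve. By naturality the twisting automorphisms slide past the
structure maps of `G`, so every identity, evaluated on a generator, splits into the same
simplicial identity in `N(C)` and in `G` plus the commutation of two twisting automorphisms.
These are attached to two vertices of one simplex of `N(C)`, which are joined by a morphism of
`C`, so they commute.
-/

namespace CategoryTheory.Iso

variable {D : Type*} [Category D] {X : D} {A B : X ≅ X}

lemma inv_comp_hom_comm (h : A.hom ≫ B.hom = B.hom ≫ A.hom) :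
    A.inv ≫ B.hom = B.hom ≫ A.inv := by
  rw [inv_comp_eq, ← Category.assoc, h, Category.assoc, hom_inv_id, Category.comp_id]

lemma inv_comp_inv_comm (h : A.hom ≫ B.hom = B.hom ≫ A.hom) :
    A.inv ≫ B.inv = B.inv ≫ A.inv := by
  rw [inv_comp_eq, ← Category.assoc, ← inv_comp_hom_comm h.symm, Category.assoc, hom_inv_id,
    Category.comp_id]

end CategoryTheory.Iso

namespace TwistedSG

section TwistedMaps

variable {D : Type*} [Category D] {X : SimplicialObject D}

def twistedδ (τ : X ⟶ X) {n : ℕ} (i : Fin (n + 2)) : X _⦋n + 1⦌ ⟶ X _⦋n⦌ :=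
  X.δ i ≫ τ.app _

def twistedσ (τ : X ⟶ X) {n : ℕ} (i : Fin (n + 1)) : X _⦋n⦌ ⟶ X _⦋n + 1⦌ :=
  X.σ i ≫ τ.app _

variable {τ₁ τ₂ : X ⟶ X} {n : ℕ}

lemma twistedδ_comp_twistedδ (h : τ₁ ≫ τ₂ = τ₂ ≫ τ₁) {i j : Fin (n + 2)} (H : i ≤ j) :
    twistedδ τ₁ j.succ ≫ twistedδ τ₂ i = twistedδ τ₂ i.castSucc ≫ twistedδ τ₁ j := by
  simp only [twistedδ, Category.assoc, ← SimplicialObject.δ_naturality_assoc,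
    X.δ_comp_δ_assoc H, ← NatTrans.comp_app, h]

lemma twistedσ_comp_twistedσ (h : τ₁ ≫ τ₂ = τ₂ ≫ τ₁) {i j : Fin (n + 1)} (H : i ≤ j) :
    twistedσ τ₁ j ≫ twistedσ τ₂ i.castSucc = twistedσ τ₂ i ≫ twistedσ τ₁ j.succ := by
  simp only [twistedσ, Category.assoc, ← SimplicialObject.σ_naturality_assoc,
    X.σ_comp_σ_assoc H, ← NatTrans.comp_app, h]

lemma twistedδ_comp_twistedσ_of_le (h : τ₁ ≫ τ₂ = τ₂ ≫ τ₁) {i : Fin (n + 2)}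
    {j : Fin (n + 1)} (H : i ≤ j.castSucc) :
    twistedσ τ₁ j.succ ≫ twistedδ τ₂ i.castSucc = twistedδ τ₂ i ≫ twistedσ τ₁ j := by
  simp only [twistedσ, twistedδ, Category.assoc, ← SimplicialObject.σ_naturality_assoc,
    ← SimplicialObject.δ_naturality_assoc, X.δ_comp_σ_of_le_assoc H, ← NatTrans.comp_app, h]

lemma twistedδ_comp_twistedσ_of_gt (h : τ₁ ≫ τ₂ = τ₂ ≫ τ₁) {i : Fin (n + 2)}
    {j : Fin (n + 1)} (H : j.castSucc < i) :
    twistedσ τ₁ j.castSucc ≫ twistedδ τ₂ i.succ = twistedδ τ₂ i ≫ twistedσ τ₁ j := by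
  simp only [twistedσ, twistedδ, Category.assoc, ← SimplicialObject.σ_naturality_assoc,
    ← SimplicialObject.δ_naturality_assoc, X.δ_comp_σ_of_gt_assoc H, ← NatTrans.comp_app, h]

lemma twistedδ_comp_twistedσ_self (h : τ₁ ≫ τ₂ = 𝟙 X) {i : Fin (n + 1)} :
    twistedσ τ₁ i ≫ twistedδ τ₂ i.castSucc = 𝟙 _ := by
  simp only [twistedσ, twistedδ, Category.assoc, ← SimplicialObject.δ_naturality_assoc,
    X.δ_comp_σ_self_assoc, ← NatTrans.comp_app, h, NatTrans.id_app]

lemma twistedδ_comp_twistedσ_succ (h : τ₁ ≫ τ₂ = 𝟙 X) {i : Fin (n + 1)} :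
    twistedσ τ₁ i ≫ twistedδ τ₂ i.succ = 𝟙 _ := by
  simp only [twistedσ, twistedδ, Category.assoc, ← SimplicialObject.δ_naturality_assoc,
    X.δ_comp_σ_succ_assoc, ← NatTrans.comp_app, h, NatTrans.id_app]

end TwistedMaps

section FreeConstruction

variable {C : Type u} [SmallCategory C] {G : SimplicialObject GrpCat.{u}} {a₀ : C}

def IsTwistedStructure (δ : C → (G ≅ G)) : Prop :=
  ∀ v w : C, (Nonempty (v ⟶ w) ∨ Nonempty (w ⟶ v)) →
    (δ v).hom ≫ (δ w).hom = (δ w).hom ≫ (δ v).hom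

lemma IsTwistedStructure.hom_comp_hom_comm {δ : C → (G ≅ G)} (hδ : IsTwistedStructure δ)
    {m : ℕ} (x : ComposableArrows C m) (j k : Fin (m + 1)) :
    (δ (x.obj j)).hom ≫ (δ (x.obj k)).hom = (δ (x.obj k)).hom ≫ (δ (x.obj j)).hom :=
  hδ _ _ ((le_total j k).imp (fun h => ⟨x.map (homOfLE h)⟩) (fun h => ⟨x.map (homOfLE h)⟩))

variable (a₀) in
def FG.of {n : ℕ} (x : ComposableArrows C n) : Gn G n →* FG C G a₀ n :=
  (QuotientGroup.mk' _).comp (incl C G x)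

lemma FG.hom_ext {n : ℕ} {M : Type*} [Monoid M] {f f' : FG C G a₀ n →* M}
    (h : ∀ x, f.comp (FG.of a₀ x) = f'.comp (FG.of a₀ x)) : f = f' :=
  QuotientGroup.monoidHom_ext _ (Monoid.CoprodI.ext_hom _ _ h)

lemma FG.comp_comp_of {n m k : ℕ} {f : FG C G a₀ n →* FG C G a₀ m}
    {f' : FG C G a₀ m →* FG C G a₀ k} {x : ComposableArrows C n} {y : ComposableArrows C m}
    {z : ComposableArrows C k} {φ : G.obj _ ⟶ G.obj _} {ψ : G.obj _ ⟶ G.obj _}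
    (hf : f.comp (FG.of a₀ x) = (FG.of a₀ y).comp φ.hom)
    (hf' : f'.comp (FG.of a₀ y) = (FG.of a₀ z).comp ψ.hom) :
    (f'.comp f).comp (FG.of a₀ x) = (FG.of a₀ z).comp (φ ≫ ψ).hom := by
  rw [MonoidHom.comp_assoc, hf, ← MonoidHom.comp_assoc, hf', MonoidHom.comp_assoc]
  rfl

variable {δ : C → (G ≅ G)}

lemma dFace_comp_of {n : ℕ} (i : Fin (n + 2)) (x : ComposableArrows C (n + 1)) :
    (dFace C G a₀ δ i).comp (FG.of a₀ x) =
      (FG.of a₀ ((nerve C).δ i x)).comp (twistedδ (δ (x.obj i)).hom i).hom :=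
  rfl

lemma sDegen_comp_of {n : ℕ} (i : Fin (n + 1)) (x : ComposableArrows C n) :
    (sDegen C G a₀ δ i).comp (FG.of a₀ x) =
      (FG.of a₀ ((nerve C).σ i x)).comp (twistedσ (δ (x.obj i)).inv i).hom :=
  rfl

lemma dFace_comp_dFace (hδ : IsTwistedStructure δ) {n : ℕ} {i j : Fin (n + 2)} (hji : j ≤ i) :
    (dFace C G a₀ δ i).comp (dFace C G a₀ δ j.castSucc) =
      (dFace C G a₀ δ j).comp (dFace C G a₀ δ i.succ) := by
  refine FG.hom_ext fun x => ?_
  rw [FG.comp_comp_of (dFace_comp_of _ x) (dFace_comp_of _ _),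
    FG.comp_comp_of (dFace_comp_of _ x) (dFace_comp_of _ _), nerve.δ_obj, nerve.δ_obj,
    Fin.succAbove_castSucc_of_le _ _ hji,
    Fin.succAbove_of_castSucc_lt _ _ (Fin.castSucc_lt_succ_iff.mpr hji),
    ← twistedδ_comp_twistedδ (hδ.hom_comp_hom_comm x _ _) hji]
  congr 2
  exact (ConcreteCategory.congr_hom ((nerve C).δ_comp_δ hji) x).symm

lemma sDegen_comp_sDegen (hδ : IsTwistedStructure δ) {n : ℕ} {i j : Fin (n + 1)} (hji : j ≤ i) :
    (sDegen C G a₀ δ j.castSucc).comp (sDegen C G a₀ δ i) =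
      (sDegen C G a₀ δ i.succ).comp (sDegen C G a₀ δ j) := by
  refine FG.hom_ext fun x => ?_
  rw [FG.comp_comp_of (sDegen_comp_of _ x) (sDegen_comp_of _ _),
    FG.comp_comp_of (sDegen_comp_of _ x) (sDegen_comp_of _ _), nerve.σ_obj, nerve.σ_obj,
    Fin.predAbove_castSucc_of_le _ _ hji, Fin.predAbove_succ_of_le _ _ hji,
    twistedσ_comp_twistedσ (Iso.inv_comp_inv_comm (hδ.hom_comp_hom_comm x _ _)) hji]
  congr 2
  exact ConcreteCategory.congr_hom ((nerve C).σ_comp_σ hji) x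

lemma dFace_comp_sDegen_of_le (hδ : IsTwistedStructure δ) {n : ℕ} {i : Fin (n + 2)}
    {j : Fin (n + 1)} (hij : i ≤ j.castSucc) :
    (dFace C G a₀ δ i.castSucc).comp (sDegen C G a₀ δ j.succ) =
      (sDegen C G a₀ δ j).comp (dFace C G a₀ δ i) := by
  refine FG.hom_ext fun x => ?_
  rw [FG.comp_comp_of (sDegen_comp_of _ x) (dFace_comp_of _ _),
    FG.comp_comp_of (dFace_comp_of _ x) (sDegen_comp_of _ _), nerve.σ_obj, nerve.δ_obj,
    Fin.predAbove_of_le_castSucc _ _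
      (Fin.castSucc_le_castSucc_iff.mpr (hij.trans Fin.castSucc_lt_succ.le)),
    Fin.castPred_castSucc, Fin.succAbove_of_le_castSucc _ _ hij,
    twistedδ_comp_twistedσ_of_le (Iso.inv_comp_hom_comm (hδ.hom_comp_hom_comm x _ _)) hij]
  congr 2
  exact ConcreteCategory.congr_hom ((nerve C).δ_comp_σ_of_le hij) x

lemma dFace_castSucc_comp_sDegen {n : ℕ} (j : Fin (n + 1)) :
    (dFace C G a₀ δ j.castSucc).comp (sDegen C G a₀ δ j) = MonoidHom.id _ := by
  refine FG.hom_ext fun x => ?_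
  rw [FG.comp_comp_of (sDegen_comp_of _ x) (dFace_comp_of _ _), nerve.σ_obj,
    Fin.predAbove_castSucc_self, twistedδ_comp_twistedσ_self (δ _).inv_hom_id,
    GrpCat.hom_id, MonoidHom.comp_id, MonoidHom.id_comp]
  exact congrArg (FG.of a₀) (ConcreteCategory.congr_hom (nerve C).δ_comp_σ_self x)

lemma dFace_succ_comp_sDegen {n : ℕ} (j : Fin (n + 1)) :
    (dFace C G a₀ δ j.succ).comp (sDegen C G a₀ δ j) = MonoidHom.id _ := by
  refine FG.hom_ext fun x => ?_
  rw [FG.comp_comp_of (sDegen_comp_of _ x) (dFace_comp_of _ _), nerve.σ_obj,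
    Fin.predAbove_succ_self, twistedδ_comp_twistedσ_succ (δ _).inv_hom_id,
    GrpCat.hom_id, MonoidHom.comp_id, MonoidHom.id_comp]
  exact congrArg (FG.of a₀) (ConcreteCategory.congr_hom (nerve C).δ_comp_σ_succ x)

lemma dFace_comp_sDegen_of_gt (hδ : IsTwistedStructure δ) {n : ℕ} {i : Fin (n + 2)}
    {j : Fin (n + 1)} (hji : j.castSucc < i) :
    (dFace C G a₀ δ i.succ).comp (sDegen C G a₀ δ j.castSucc) =
      (sDegen C G a₀ δ j).comp (dFace C G a₀ δ i) := by
  refine FG.hom_ext fun x => ?_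
  rw [FG.comp_comp_of (sDegen_comp_of _ x) (dFace_comp_of _ _),
    FG.comp_comp_of (dFace_comp_of _ x) (sDegen_comp_of _ _), nerve.σ_obj, nerve.δ_obj,
    Fin.predAbove_of_castSucc_lt _ _ (Fin.castSucc_lt_succ_iff.mpr hji.le), Fin.pred_succ,
    Fin.succAbove_of_castSucc_lt _ _ hji,
    twistedδ_comp_twistedσ_of_gt (Iso.inv_comp_hom_comm (hδ.hom_comp_hom_comm x _ _)) hji]
  congr 2
  exact ConcreteCategory.congr_hom ((nerve C).δ_comp_σ_of_gt hji) x

end FreeConstruction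

end TwistedSG

/-- for a nonsingular twisted structure `δ` on a small category `C` with
coefficients in a simplicial group `G`, the twisted faces and degeneracies on the sequence of
groups `{F^G[C]_n}` satisfy all the simplicial identities; hence `F^G_δ[C]` is a simplicial
group. -/
theorem TwistedSG.simplicial_identities {C : Type u} [SmallCategory C]
    (G : SimplicialObject GrpCat.{u}) (a₀ : C) (δ : C → (G ≅ G))
    (hcomm : ∀ v w : C, (Nonempty (v ⟶ w) ∨ Nonempty (w ⟶ v)) →
      (δ v).hom ≫ (δ w).hom = (δ w).hom ≫ (δ v).hom) :
    -- (1) `d_i^δ ∘ d_j^δ = d_j^δ ∘ d_{i+1}^δ` for `i ≥ j`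
    (∀ (n : ℕ) (i j : Fin (n + 2)), j ≤ i →
      (dFace C G a₀ δ i).comp (dFace C G a₀ δ j.castSucc) =
        (dFace C G a₀ δ j).comp (dFace C G a₀ δ i.succ)) ∧
    -- (2) `s_j^δ ∘ s_i^δ = s_{i+1}^δ ∘ s_j^δ` for `i ≥ j`
    (∀ (n : ℕ) (i j : Fin (n + 1)), j ≤ i →
      (sDegen C G a₀ δ j.castSucc).comp (sDegen C G a₀ δ i) =
        (sDegen C G a₀ δ i.succ).comp (sDegen C G a₀ δ j)) ∧
    -- (3) `d_i^δ ∘ s_j^δ = s_{j-1}^δ ∘ d_i^δ` for `i < j`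
    (∀ (n : ℕ) (i : Fin (n + 2)) (j : Fin (n + 1)), i ≤ j.castSucc →
      (dFace C G a₀ δ i.castSucc).comp (sDegen C G a₀ δ j.succ) =
        (sDegen C G a₀ δ j).comp (dFace C G a₀ δ i)) ∧
    -- (4) `d_j^δ ∘ s_j^δ = id = d_{j+1}^δ ∘ s_j^δ`
    (∀ (n : ℕ) (j : Fin (n + 1)),
      (dFace C G a₀ δ j.castSucc).comp (sDegen C G a₀ δ j) = MonoidHom.id _ ∧
      (dFace C G a₀ δ j.succ).comp (sDegen C G a₀ δ j) = MonoidHom.id _) ∧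
    -- (5) `d_i^δ ∘ s_j^δ = s_j^δ ∘ d_{i-1}^δ` for `i > j + 1`
    (∀ (n : ℕ) (i : Fin (n + 2)) (j : Fin (n + 1)), j.castSucc < i →
      (dFace C G a₀ δ i.succ).comp (sDegen C G a₀ δ j.castSucc) =
        (sDegen C G a₀ δ j).comp (dFace C G a₀ δ i)) := by
  exact ⟨fun _ _ _ => dFace_comp_dFace hcomm, fun _ _ _ => sDegen_comp_sDegen hcomm,
    fun _ _ _ => dFace_comp_sDegen_of_le hcomm,
    fun _ j => ⟨dFace_castSucc_comp_sDegen j, dFace_succ_comp_sDegen j⟩,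
    fun _ _ _ => dFace_comp_sDegen_of_gt hcomm⟩
end
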